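/- arXiv:2403.06722 — 3 statements merged into one kernel-verified Lean document; each statement's English description precedes it below -/
import Mathlib

section
/- For every real s, the function λ ↦ −log(1 − σ(λ;s)) = log(1 + exp(s − λ²)) is integrable on ℝ, and ∫_ℝ log(1 − σ(λ;s)) dλ = −2 ∫_ℝ σ(λ;s) λ² dλ. -/
open MeasureTheory

noncomputable def fermi (τ s : ℝ) : ℝ := 1 / (1 + Real.exp (τ ^ 2 - s))

/-!
Writing `σ = fermi`, one has `log (1 - σ(λ;s)) = -log (1 + e^(s-λ²))`, whose derivative in `λ` is
`2λσ(λ;s)`. Both `|log (1 - σ)|` and `σ` are bounded by `e^(s-λ²)`, so every function in sight,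
even after multiplication by a power of `λ`, has Gaussian decay. Integrating `log (1 - σ) · 1` by
parts, with `λ` as antiderivative of `1`, therefore produces no boundary terms and gives
`∫ log (1 - σ) = -∫ 2λσ · λ`.
-/

open Real

theorem abs_log_one_add_exp_le (x : ℝ) : |log (1 + exp x)| ≤ exp x := by
  have hpos : 0 < 1 + exp x := by positivity
  rw [abs_of_nonneg (log_nonneg (by linarith [exp_pos x]))]
  linarith [log_le_sub_one_of_pos hpos]

theorem integrable_pow_mul_exp_neg_mul_sq {b : ℝ} (hb : 0 < b) (n : ℕ) :
    Integrable fun x : ℝ => x ^ n * exp (-b * x ^ 2) := by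
  simpa [rpow_natCast] using
    integrable_rpow_mul_exp_neg_mul_sq hb (s := n) (by linarith [n.cast_nonneg (α := ℝ)])

theorem integrable_pow_mul_of_abs_le_exp_sub_sq {f : ℝ → ℝ} {s : ℝ}
    (hf : AEStronglyMeasurable f) (hle : ∀ x, |f x| ≤ exp (s - x ^ 2)) (n : ℕ) :
    Integrable fun x => x ^ n * f x := by
  refine ((integrable_pow_mul_exp_neg_mul_sq one_pos n).norm.const_mul (exp s)).mono'
    ((continuous_pow n).aestronglyMeasurable.mul hf) (ae_of_all _ fun x => ?_)
  have hsplit : exp (s - x ^ 2) = exp s * exp (-1 * x ^ 2) := by rw [← exp_add]; ring_nf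
  rw [norm_mul, norm_mul, norm_eq_abs (f x), norm_of_nonneg (exp_pos _).le]
  calc ‖x ^ n‖ * |f x| ≤ ‖x ^ n‖ * exp (s - x ^ 2) := by gcongr; exact hle x
    _ = exp s * (‖x ^ n‖ * exp (-1 * x ^ 2)) := by rw [hsplit]; ring

theorem fermi_eq_exp_div (τ s : ℝ) : fermi τ s = exp (s - τ ^ 2) / (1 + exp (s - τ ^ 2)) := by
  rw [fermi, show τ ^ 2 - s = -(s - τ ^ 2) by ring, exp_neg]
  field_simp
  ring

theorem one_sub_fermi (τ s : ℝ) : 1 - fermi τ s = (1 + exp (s - τ ^ 2))⁻¹ := by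
  rw [fermi_eq_exp_div]
  field_simp
  ring

theorem log_one_sub_fermi (τ s : ℝ) : log (1 - fermi τ s) = -log (1 + exp (s - τ ^ 2)) := by
  rw [one_sub_fermi, log_inv]

theorem abs_log_one_sub_fermi_le (τ s : ℝ) : |log (1 - fermi τ s)| ≤ exp (s - τ ^ 2) := by
  rw [log_one_sub_fermi, abs_neg]
  exact abs_log_one_add_exp_le _

theorem abs_fermi_le (τ s : ℝ) : |fermi τ s| ≤ exp (s - τ ^ 2) := by
  rw [fermi_eq_exp_div, abs_of_nonneg (by positivity)]
  exact div_le_self (exp_pos _).le (by linarith [exp_pos (s - τ ^ 2)])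

theorem continuous_fermi (s : ℝ) : Continuous fun τ => fermi τ s := by
  unfold fermi
  exact continuous_const.div (by fun_prop) fun τ => by positivity

theorem hasDerivAt_log_one_sub_fermi (τ s : ℝ) :
    HasDerivAt (fun τ => log (1 - fermi τ s)) (2 * τ * fermi τ s) τ := by
  have hpos : 0 < 1 + exp (s - τ ^ 2) := by positivity
  have h := (((hasDerivAt_pow 2 τ).const_sub s).exp.const_add 1).log hpos.ne'
  simp_rw [log_one_sub_fermi]
  refine h.neg.congr_deriv ?_
  rw [fermi_eq_exp_div]
  field_simp
  ring

theorem log_one_sub_fermi_integrable_and_identity (s : ℝ) :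
    Integrable (fun lam : ℝ => Real.log (1 + Real.exp (s - lam ^ 2))) ∧
    (∫ lam : ℝ, Real.log (1 - fermi lam s)) = -2 * ∫ lam : ℝ, fermi lam s * lam ^ 2 := by
  have hderiv := fun τ => hasDerivAt_log_one_sub_fermi τ s
  have hcont : Continuous fun τ => log (1 - fermi τ s) :=
    continuous_iff_continuousAt.2 fun τ => (hderiv τ).continuousAt
  have hlog_int := integrable_pow_mul_of_abs_le_exp_sub_sq hcont.aestronglyMeasurable
    (abs_log_one_sub_fermi_le · s)
  have hfermi_int :=
    integrable_pow_mul_of_abs_le_exp_sub_sq (continuous_fermi s).aestronglyMeasurable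
    (abs_fermi_le · s)
  refine ⟨by simpa [log_one_sub_fermi] using (hlog_int 0).neg, ?_⟩
  have ibp : ∫ τ, log (1 - fermi τ s) * 1 = -∫ τ, 2 * τ * fermi τ s * τ :=
    integral_mul_deriv_eq_deriv_mul_of_integrable (v := id) (v' := fun _ => 1)
      (fun τ _ => hderiv τ) (fun τ _ => hasDerivAt_id τ)
      (by simpa [Pi.mul_def] using hlog_int 0)
      (by
        convert (hfermi_int 2).const_mul 2 using 1
        funext τ
        simp only [Pi.mul_apply, id]
        ring)
      (by simpa [Pi.mul_def, mul_comm] using hlog_int 1)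
  have hrearrange : (fun τ => 2 * τ * fermi τ s * τ) = fun τ => 2 * (fermi τ s * τ ^ 2) := by
    funext τ
    ring
  simpa only [mul_one, hrearrange, integral_const_mul, neg_mul] using ibp
end

section
/- Define C₊(l) = −2/(3l) + 1/(4l²) for l > 0 and C₋(l) = −1/2 + l²/12. Then C₊ and C₋ have the same value, first derivative, and second derivative at l = 1 (all three quantities agreeing: C₊(1) = C₋(1) = −5/12, C₊'(1) = C₋'(1) = 1/6, C₊''(1) = C₋''(1) = 1/6), but their third derivatives at l = 1 differ: C₊'''(1) = −2 while C₋'''(1) = 0. -/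
noncomputable def Cplus (l : ℝ) : ℝ := -2 / (3 * l) + 1 / (4 * l ^ 2)

noncomputable def Cminus (l : ℝ) : ℝ := -1 / 2 + l ^ 2 / 12

/-! `C₊` is a combination of `l⁻¹` and `l⁻²`, whose iterated derivatives are given by the
falling-factorial formula for integer powers, while `C₋` is a quadratic, so its third derivative
vanishes. -/

open Finset

theorem iteratedDeriv_zpow {𝕜 : Type*} [NontriviallyNormedField 𝕜] (m : ℤ) (k : ℕ) (x : 𝕜) :
    iteratedDeriv k (· ^ m) x = (∏ i ∈ range k, ((m : 𝕜) - i)) * x ^ (m - k) := by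
  rw [iteratedDeriv_eq_iterate, iter_deriv_zpow]

theorem contDiffAt_zpow {𝕜 : Type*} [NontriviallyNormedField 𝕜] {x : 𝕜} (hx : x ≠ 0)
    (m : ℤ) (n : WithTop ℕ∞) : ContDiffAt 𝕜 n (· ^ m) x := by
  obtain ⟨k, rfl | rfl⟩ := Int.eq_nat_or_neg m
  · simp only [zpow_natCast]
    fun_prop
  · simp only [zpow_neg, zpow_natCast]
    fun_prop (disch := exact pow_ne_zero k hx)

theorem Cplus_eq_zpow : Cplus = fun l => -2 / 3 * l ^ (-1 : ℤ) + 1 / 4 * l ^ (-2 : ℤ) := by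
  funext l
  simp only [Cplus, zpow_neg, zpow_one, zpow_two]
  ring

theorem iteratedDeriv_Cplus (n : ℕ) {l : ℝ} (hl : l ≠ 0) :
    iteratedDeriv n Cplus l =
      -2 / 3 * (∏ i ∈ range n, (-1 - (i : ℝ))) * l ^ (-1 - n : ℤ) +
        1 / 4 * (∏ i ∈ range n, (-2 - (i : ℝ))) * l ^ (-2 - n : ℤ) := by
  rw [Cplus_eq_zpow, iteratedDeriv_fun_add (contDiffAt_const.mul (contDiffAt_zpow hl _ _))
    (contDiffAt_const.mul (contDiffAt_zpow hl _ _)),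
    iteratedDeriv_const_mul_field, iteratedDeriv_const_mul_field, iteratedDeriv_zpow,
    iteratedDeriv_zpow]
  push_cast
  ring

theorem iteratedDeriv_Cminus {n : ℕ} (hn : 0 < n) (l : ℝ) :
    iteratedDeriv n Cminus l = (2).descFactorial n * l ^ (2 - n) / 12 := by
  rw [show Cminus = fun l => -1 / 2 + l ^ 2 / 12 from rfl, iteratedDeriv_const_add hn,
    iteratedDeriv_div_const, iteratedDeriv_pow]

theorem third_order_phase_transition :
    Cplus 1 = -5 / 12 ∧ Cminus 1 = -5 / 12 ∧
    deriv Cplus 1 = 1 / 6 ∧ deriv Cminus 1 = 1 / 6 ∧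
    iteratedDeriv 2 Cplus 1 = 1 / 6 ∧ iteratedDeriv 2 Cminus 1 = 1 / 6 ∧
    iteratedDeriv 3 Cplus 1 = -2 ∧ iteratedDeriv 3 Cminus 1 = 0 := by
  simp only [← iteratedDeriv_one, iteratedDeriv_Cplus _ one_ne_zero,
    iteratedDeriv_Cminus (Nat.succ_pos _)]
  norm_num [Cplus, Cminus, prod_range_succ, Nat.descFactorial]
end

section
/- Let σ: ℝ → ℝ be continuous, nonnegative, even, and integrable with ∫_ℝ (1+|ζ|)σ(ζ)dζ < ∞. Then lim_{ε→0⁺} ∫_{ℝ²} ζ σ(ζ) σ(λ) / (ζ − λ − iε) dλ dζ = (1/2)·( ∫_ℝ σ(λ) dλ )². -/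
/-!
Evenness of `σ` makes the integrand at `-p` the complex conjugate of the integrand at `p`, so the
integral is real and equals the integral of its real part `σ(ζ)σ(λ) ζ(ζ-λ)/((ζ-λ)² + ε²)`.
Averaging over the swap `ζ ↔ λ` turns `ζ(ζ-λ)` into `(ζ-λ)²/2`. The factor `(ζ-λ)²/((ζ-λ)² + ε²)`
lies in `[0, 1]` and tends to `1` off the null diagonal, so dominated convergence gives
`(∫ σ)² / 2` as `ε → 0⁺`.
-/

open MeasureTheory Filter Topology ComplexConjugate

lemma sq_div_sq_add_sq_mem_Icc (x ε : ℝ) : x ^ 2 / (x ^ 2 + ε ^ 2) ∈ Set.Icc (0 : ℝ) 1 :=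
  ⟨by positivity, div_le_one_of_le₀ (le_add_of_nonneg_right (sq_nonneg ε)) (by positivity)⟩

lemma tendsto_mul_sq_div_sq_add_sq (c : ℝ) {x : ℝ} (hx : x ≠ 0) :
    Tendsto (fun ε : ℝ => c * (x ^ 2 / (x ^ 2 + ε ^ 2))) (𝓝 0) (𝓝 c) := by
  have hx2 : 0 < x ^ 2 := by positivity
  have hcont : Continuous (fun ε : ℝ => c * (x ^ 2 / (x ^ 2 + ε ^ 2))) :=
    continuous_const.mul (continuous_const.div (by fun_prop) fun ε => by positivity)
  simpa [hx] using hcont.tendsto 0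

namespace Complex

lemma norm_inv_sub_mul_I_le (x : ℝ) {ε : ℝ} (hε : ε ≠ 0) :
    ‖((x : ℂ) - ε * I)⁻¹‖ ≤ |ε|⁻¹ := by
  rw [norm_inv]
  refine inv_anti₀ (abs_pos.2 hε) ?_
  simpa using abs_im_le_norm ((x : ℂ) - ε * I)

lemma re_ofReal_div_sub_sub_mul_I (a x y ε : ℝ) :
    ((a : ℂ) / (x - y - ε * I)).re = a * (x - y) / ((x - y) ^ 2 + ε ^ 2) := by
  rw [div_re, normSq_apply]
  simp only [ofReal_re, ofReal_im, sub_re, sub_im, mul_re, mul_im, I_re, I_im]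
  ring

lemma conj_ofReal_div_sub_sub_mul_I (a x y ε : ℝ) :
    conj ((a : ℂ) / (x - y - ε * I)) = ((-a : ℝ) : ℂ) / ((-x : ℝ) - (-y : ℝ) - ε * I) := by
  simp only [map_div₀, map_sub, map_mul, conj_ofReal, conj_I, ofReal_neg]
  rw [← neg_div_neg_eq]
  ring_nf

end Complex

namespace MeasureTheory

lemma ae_fst_ne_snd (μ ν : Measure ℝ) [SFinite ν] [NullSingletonClass ν] :
    ∀ᵐ p ∂μ.prod ν, p.1 ≠ p.2 :=
  (Measure.ae_prod_iff_ae_ae (measurableSet_eq_fun measurable_fst measurable_snd).compl).2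
    (ae_of_all _ fun x => (Measure.ae_ne ν x).mono fun _ h => Ne.symm h)

lemma tendsto_integral_mul_sq_div_sq_add_sq {f : ℝ × ℝ → ℝ} (hf : Integrable f) :
    Tendsto (fun ε : ℝ => ∫ p, f p * ((p.1 - p.2) ^ 2 / ((p.1 - p.2) ^ 2 + ε ^ 2)))
      (𝓝 0) (𝓝 (∫ p, f p)) := by
  refine tendsto_integral_filter_of_dominated_convergence (fun p => ‖f p‖) ?_ ?_ hf.norm ?_
  · exact Eventually.of_forall fun ε =>
      hf.aestronglyMeasurable.mul (by fun_prop : Measurable _).aestronglyMeasurable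
  · refine Eventually.of_forall fun ε => Eventually.of_forall fun p => ?_
    obtain ⟨h0, h1⟩ := sq_div_sq_add_sq_mem_Icc (p.1 - p.2) ε
    rw [norm_mul, Real.norm_of_nonneg h0]
    exact mul_le_of_le_one_right (norm_nonneg _) h1
  · filter_upwards [ae_fst_ne_snd volume volume] with p hp
    exact tendsto_mul_sq_div_sq_add_sq (f p) (sub_ne_zero.2 hp)

lemma Integrable.ofReal_div_sub_sub_mul_I {μ : Measure (ℝ × ℝ)} {h : ℝ × ℝ → ℝ}
    (hh : Integrable h μ) {ε : ℝ} (hε : ε ≠ 0) :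
    Integrable (fun p => (h p : ℂ) / ((p.1 : ℂ) - p.2 - ε * Complex.I)) μ := by
  simp_rw [div_eq_mul_inv]
  refine hh.ofReal.mul_bdd (c := |ε|⁻¹) (by fun_prop : Measurable _).aestronglyMeasurable
    (ae_of_all _ fun p => ?_)
  simpa using Complex.norm_inv_sub_mul_I_le (p.1 - p.2) hε

lemma integral_eq_ofReal_integral_re_of_comp_neg {G : Type*} [MeasurableSpace G] [AddGroup G]
    [MeasurableNeg G] {μ : Measure G} [μ.IsNegInvariant] {F : G → ℂ} (hF : Integrable F μ)
    (hneg : ∀ x, F (-x) = conj (F x)) :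
    ∫ x, F x ∂μ = ((∫ x, (F x).re ∂μ : ℝ) : ℂ) := by
  have hconj : conj (∫ x, F x ∂μ) = ∫ x, F x ∂μ := by
    rw [← integral_conj, ← integral_neg_eq_self F μ]
    simp_rw [hneg]
  rw [← Complex.conj_eq_iff_re.1 hconj]
  exact congrArg _ (integral_re hF).symm

lemma integral_eq_half_integral_add_swap {α : Type*} [MeasurableSpace α] {μ : Measure α}
    [SFinite μ] {f : α × α → ℝ} (hf : Integrable f (μ.prod μ)) :
    ∫ p, f p ∂μ.prod μ = (∫ p, (f p + f p.swap) ∂μ.prod μ) / 2 := by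
  rw [integral_add hf (hf.swap : Integrable (fun p => f p.swap) _), integral_prod_swap]
  ring

end MeasureTheory

lemma integral_cauchy_kernel_eq_of_even {σ : ℝ → ℝ} (heven : ∀ x, σ (-x) = σ x)
    (hσ : Integrable σ) (hζσ : Integrable (fun ζ : ℝ => ζ * σ ζ)) {ε : ℝ} (hε : ε ≠ 0) :
    ∫ p : ℝ × ℝ, ((p.1 * σ p.1 * σ p.2 : ℝ) : ℂ) / ((p.1 : ℂ) - p.2 - ε * Complex.I) =
      (((∫ p : ℝ × ℝ, σ p.1 * σ p.2 * ((p.1 - p.2) ^ 2 / ((p.1 - p.2) ^ 2 + ε ^ 2))) / 2 :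
        ℝ) : ℂ) := by
  have hF : Integrable _ (volume : Measure (ℝ × ℝ)) :=
    (hζσ.mul_prod hσ).ofReal_div_sub_sub_mul_I hε
  rw [integral_eq_ofReal_integral_re_of_comp_neg hF]
  · refine congrArg _ ((integral_eq_half_integral_add_swap hF.re).trans ?_)
    congr 2 with p
    simp only [RCLike.re_to_complex, Complex.re_ofReal_div_sub_sub_mul_I, Prod.fst_swap,
      Prod.snd_swap]
    ring
  · intro p
    rw [Complex.conj_ofReal_div_sub_sub_mul_I, Prod.fst_neg, Prod.snd_neg, heven, heven]
    push_cast
    ring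

theorem symmetrization_double_integral_general
    (σ : ℝ → ℝ) (heven : ∀ x, σ (-x) = σ x) (hInt : Integrable σ)
    (hInt1 : Integrable (fun ζ : ℝ => (1 + |ζ|) * σ ζ)) :
    Tendsto (fun ε : ℝ =>
        ∫ p : ℝ × ℝ, ((p.1 * σ p.1 * σ p.2 : ℝ) : ℂ) /
          ((p.1 : ℂ) - (p.2 : ℂ) - (ε : ℂ) * Complex.I))
      (nhdsWithin 0 (Set.Ioi 0))
      (nhds ((((∫ lam : ℝ, σ lam) ^ 2 / 2 : ℝ) : ℂ))) := by
  have hζσ : Integrable (fun ζ : ℝ => ζ * σ ζ) :=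
    (hInt1.sub hInt).mono (continuous_id.aestronglyMeasurable.mul hInt.aestronglyMeasurable)
      (ae_of_all _ fun ζ => by simp [← sub_one_mul])
  have hσσ : Integrable (fun p : ℝ × ℝ => σ p.1 * σ p.2) := hInt.mul_prod hInt
  have hσσ_eq : ∫ p : ℝ × ℝ, σ p.1 * σ p.2 = (∫ x, σ x) ^ 2 := by
    rw [sq]; exact integral_prod_mul σ σ
  have hlim := ((tendsto_integral_mul_sq_div_sq_add_sq hσσ).mono_left
    (nhdsWithin_le_nhds (s := Set.Ioi 0))).div_const 2
  rw [hσσ_eq] at hlim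
  refine ((Complex.continuous_ofReal.tendsto _).comp hlim).congr' ?_
  filter_upwards [self_mem_nhdsWithin] with ε hε
  exact (integral_cauchy_kernel_eq_of_even heven hInt hζσ hε.ne').symm

theorem symmetrization_double_integral
    (σ : ℝ → ℝ) (hcont : Continuous σ) (hnonneg : ∀ x, 0 ≤ σ x)
    (heven : ∀ x, σ (-x) = σ x) (hInt : Integrable σ)
    (hInt1 : Integrable (fun ζ : ℝ => (1 + |ζ|) * σ ζ)) :
    Tendsto (fun ε : ℝ =>
        ∫ p : ℝ × ℝ, ((p.1 * σ p.1 * σ p.2 : ℝ) : ℂ) /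
          ((p.1 : ℂ) - (p.2 : ℂ) - (ε : ℂ) * Complex.I))
      (nhdsWithin 0 (Set.Ioi 0))
      (nhds ((((∫ lam : ℝ, σ lam) ^ 2 / 2 : ℝ) : ℂ))) :=
  symmetrization_double_integral_general σ heven hInt hInt1
end
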